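/- For a consistent positive n×n matrix M (n ≥ 1), the characteristic polynomial of M equals X^(n-1) * (X - n). -/

import Mathlib

/-!
Consistency `M i j = M i k * M k j` says that `M` is the rank-one matrix `vecMulVec (M · k) (M k)`
for any fixed `k`, and the characteristic polynomial of `vecMulVec u v` is
`X ^ n - (u ⬝ᵥ v) • X ^ (n - 1)`. Here `u ⬝ᵥ v = ∑ i, M i k * M k i = trace M`, and every
diagonal entry is a nonzero idempotent `M i i = M i i * M i i`, hence `1`, so the trace is `n`.
-/

open Polynomial

namespace Matrix

variable {ι R : Type*}

theorem eq_vecMulVec_of_consistent [Mul R] {M : Matrix ι ι R}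
    (hcons : ∀ i j k, M i j = M i k * M k j) (k : ι) :
    M = vecMulVec (fun i => M i k) (M k) :=
  ext fun i j => hcons i j k

theorem charpoly_of_consistent [CommRing R] [Fintype ι] [DecidableEq ι] [Nonempty ι]
    {M : Matrix ι ι R} (hcons : ∀ i j k, M i j = M i k * M k j) :
    M.charpoly = X ^ Fintype.card ι - M.trace • X ^ (Fintype.card ι - 1) := by
  obtain ⟨k⟩ := ‹Nonempty ι›
  have hdot : (fun i => M i k) ⬝ᵥ M k = M.trace := by
    simp only [dotProduct, trace, diag, ← hcons]
  conv_lhs => rw [eq_vecMulVec_of_consistent hcons k]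
  rw [charpoly_vecMulVec, hdot]

theorem diag_eq_one_of_consistent [MulZeroOneClass R] [IsLeftCancelMulZero R] {M : Matrix ι ι R}
    (hcons : ∀ i j k, M i j = M i k * M k j) (hdiag : ∀ i, M i i ≠ 0) (i : ι) :
    M i i = 1 := by
  rw [← mul_eq_left₀ (hdiag i), ← hcons]

end Matrix

theorem stmt17 (n : ℕ) (hn : 1 ≤ n) (M : Matrix (Fin n) (Fin n) ℝ)
    (hpos : ∀ i j, 0 < M i j) (hcons : ∀ i j k, M i j = M i k * M k j) :
    M.charpoly = Polynomial.X ^ (n - 1) * (Polynomial.X - Polynomial.C (n : ℝ)) := by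
  have : Nonempty (Fin n) := ⟨⟨0, hn⟩⟩
  have htrace : M.trace = n := by
    simp [Matrix.trace, Matrix.diag_eq_one_of_consistent hcons fun i => (hpos i i).ne']
  rw [Matrix.charpoly_of_consistent hcons, htrace, Fintype.card_fin, smul_eq_C_mul, mul_sub,
    ← pow_succ, Nat.sub_add_cancel hn, mul_comm]
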